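/- Let T be a finite nonempty set partitioned into families {F_k}_{k∈K}, with weights w_k ≥ 0 satisfying w_k/|F_k| ≤ C/|T| for C > 0, per-task L-Lipschitz functions ψ_t : [0,1] → ℝ (L > 0), and penalty parameter λ ≥ 0. Let n ≥ 1 and let (q_{t,i})_{t∈T, 1≤i≤n} be independent [0,1]-valued random variables. Define the empirical score Φ̂ = Σ_k (w_k/|F_k|) Σ_{t∈F_k} (1/n) Σ_i ψ_t(q_{t,i}) − λ·V(m̂), where m̂_k = (1/(n|F_k|)) Σ_{t∈F_k} Σ_i q_{t,i}, V(m) = (1/|K|) Σ_k (m_k − m̄)² is the variance across families, and the population score Φ = E[Σ_k (w_k/|F_k|) Σ_{t∈F_k} (1/n) Σ_i ψ_t(q_{t,i})] − λ·V(m) with m_k = E[m̂_k]. Then for every δ ∈ (0,1), with probability at least 1 − δ, |Φ̂ − Φ| ≤ C·L·√(log(4/δ)/(2·n·|T|)) + 2·λ·√(log(4·|K|/δ)/(2·n)). -/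

import Mathlib

open MeasureTheory Finset ProbabilityTheory

/-- The family `F_k ⊆ T` of tasks assigned to family index `k`. -/
def famSet {T K : Type*} [Fintype T] [DecidableEq K] (fam : T → K) (k : K) : Finset T :=
  Finset.univ.filter fun t => fam t = k

/-- The linear part of the plug-in estimator:
`∑_k (w_k/|F_k|) ∑_{t∈F_k} (1/n) ∑_i ψ_t(q_{t,i}(ω))`. -/
noncomputable def linEst {T K : Type*} [Fintype T] [Fintype K] [DecidableEq K] {Ω : Type*}
    (fam : T → K) (w : K → ℝ) (ψ : T → ℝ → ℝ) (n : ℕ)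
    (q : T × Fin n → Ω → ℝ) (ω : Ω) : ℝ :=
  ∑ k : K, (w k / ((famSet fam k).card : ℝ)) *
    ∑ t ∈ famSet fam k, (n : ℝ)⁻¹ * ∑ i : Fin n, ψ t (q (t, i) ω)

/-- The empirical family mean `m̂_k(ω) = (1/(n|F_k|)) ∑_{t∈F_k} ∑_i q_{t,i}(ω)`. -/
noncomputable def famEst {T K : Type*} [Fintype T] [DecidableEq K] {Ω : Type*}
    (fam : T → K) (n : ℕ) (q : T × Fin n → Ω → ℝ) (k : K) (ω : Ω) : ℝ :=
  ((n : ℝ) * ((famSet fam k).card : ℝ))⁻¹ *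
    ∑ t ∈ famSet fam k, ∑ i : Fin n, q (t, i) ω

/-- The variance across families `V(m) = (1/|K|) ∑_k (m_k − m̄)²`. -/
noncomputable def varK {K : Type*} [Fintype K] (m : K → ℝ) : ℝ :=
  (Fintype.card K : ℝ)⁻¹ *
    ∑ k : K, (m k - (Fintype.card K : ℝ)⁻¹ * ∑ j : K, m j) ^ 2

/-
The error splits into the deviation of the linear part plus `λ` times the change of the
variance functional. The linear part is a sum of `n|T|` independent terms whose ranges have
width at most `C L / (n|T|)` (the weights are at most `C / (n|T|)` and `ψ_t` oscillates by at
most `L` on `[0, 1]`), so Hoeffding's inequality controls it with probability `1 - δ/2`. Each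
family mean averages at least `n` independent `[0, 1]`-valued seeds, so Hoeffding and a union
bound over the `|K|` families keep all of them within `√(log (4|K|/δ) / (2n))` of their means
with probability `1 - δ/2`; on `[0, 1]^K` the variance functional is `2`-Lipschitz for the sup
norm.
-/

open Real

section Hoeffding

variable {Ω ι : Type*} [MeasurableSpace Ω] {μ : Measure Ω} [IsProbabilityMeasure μ]

theorem measureReal_abs_sum_sub_integral_ge_le {X : ι → Ω → ℝ} (hindep : iIndepFun X μ)
    (hmeas : ∀ i, Measurable (X i)) {s : Finset ι} {a b : ι → ℝ}
    (hab : ∀ i ∈ s, ∀ ω, X i ω ∈ Set.Icc (a i) (b i))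
    {D : ℝ} (hpos : 0 < ∑ i ∈ s, (b i - a i) ^ 2) (hD : ∑ i ∈ s, (b i - a i) ^ 2 ≤ D)
    {ε : ℝ} (hε : 0 ≤ ε) :
    μ.real {ω | ε ≤ |∑ i ∈ s, X i ω - ∫ ω', ∑ i ∈ s, X i ω' ∂μ|}
      ≤ 2 * exp (-2 * ε ^ 2 / D) := by
  set Y : ι → Ω → ℝ := fun i ω => X i ω - μ[X i]
  have hY : ∀ i ∈ s, HasSubgaussianMGF (Y i) ((‖b i - a i‖₊ / 2) ^ 2) μ := fun i hi =>
    hasSubgaussianMGF_of_mem_Icc (hmeas i).aemeasurable (ae_of_all _ (hab i hi))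
  have hsum : HasSubgaussianMGF (fun ω => ∑ i ∈ s, Y i ω)
      (∑ i ∈ s, (‖b i - a i‖₊ / 2) ^ 2) μ :=
    HasSubgaussianMGF.sum_of_iIndepFun
      (hindep.comp (fun i x => x - μ[X i]) fun _ => measurable_id.sub_const _) hY
  have hcenter : ∀ ω, ∑ i ∈ s, X i ω - ∫ ω', ∑ i ∈ s, X i ω' ∂μ = ∑ i ∈ s, Y i ω := by
    intro ω
    rw [integral_finsetSum s fun i hi =>
      Integrable.of_mem_Icc _ _ (hmeas i).aemeasurable (ae_of_all _ (hab i hi)),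
      ← Finset.sum_sub_distrib]
  have hc : ((∑ i ∈ s, (‖b i - a i‖₊ / 2) ^ 2 : NNReal) : ℝ) = (∑ i ∈ s, (b i - a i) ^ 2) / 4 := by
    push_cast
    rw [Finset.sum_div]
    refine Finset.sum_congr rfl fun i _ => ?_
    rw [Real.norm_eq_abs, div_pow, sq_abs]
    norm_num
  have htail : ∀ S : Ω → ℝ, HasSubgaussianMGF S (∑ i ∈ s, (‖b i - a i‖₊ / 2) ^ 2) μ →
      μ.real {ω | ε ≤ S ω} ≤ exp (-2 * ε ^ 2 / D) := by
    intro S hS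
    refine (hS.measure_ge_le hε).trans (exp_le_exp.2 ?_)
    rw [hc, show -ε ^ 2 / (2 * ((∑ i ∈ s, (b i - a i) ^ 2) / 4))
        = -(2 * ε ^ 2 / ∑ i ∈ s, (b i - a i) ^ 2) by field_simp; ring,
      neg_mul, neg_div, neg_le_neg_iff]
    exact div_le_div_of_nonneg_left (by positivity) hpos hD
  calc μ.real {ω | ε ≤ |∑ i ∈ s, X i ω - ∫ ω', ∑ i ∈ s, X i ω' ∂μ|}
      ≤ μ.real ({ω | ε ≤ ∑ i ∈ s, Y i ω} ∪ {ω | ε ≤ -∑ i ∈ s, Y i ω}) := by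
        refine measureReal_mono (fun ω hω => ?_)
        simp only [Set.mem_ofPred_eq, hcenter, Set.mem_union] at hω ⊢
        exact le_abs.1 hω
    _ ≤ μ.real {ω | ε ≤ ∑ i ∈ s, Y i ω} + μ.real {ω | ε ≤ -∑ i ∈ s, Y i ω} :=
        measureReal_union_le _ _
    _ ≤ 2 * exp (-2 * ε ^ 2 / D) := by
        linarith [htail _ hsum, htail (fun ω => -∑ i ∈ s, Y i ω) hsum.neg]

end Hoeffding

section Variance

variable {K : Type*} [Fintype K] [Nonempty K]

lemma sum_sub_avg_eq_zero (x : K → ℝ) :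
    ∑ k, (x k - (Fintype.card K : ℝ)⁻¹ * ∑ j, x j) = 0 := by
  rw [Finset.sum_sub_distrib, Finset.sum_const, Finset.card_univ, nsmul_eq_mul, ← mul_assoc,
    mul_inv_cancel₀ (by positivity), one_mul, sub_self]

lemma abs_sub_avg_le_one {x : K → ℝ} (hx : ∀ k, x k ∈ Set.Icc (0 : ℝ) 1) (k : K) :
    |x k - (Fintype.card K : ℝ)⁻¹ * ∑ j, x j| ≤ 1 := by
  have havg : (Fintype.card K : ℝ)⁻¹ * ∑ j, x j ∈ Set.Icc (0 : ℝ) 1 := by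
    have := (convex_Icc (0 : ℝ) 1).sum_mem (t := Finset.univ) (w := fun _ => (Fintype.card K : ℝ)⁻¹)
      (fun _ _ => by positivity) (by simp) (fun j _ => hx j)
    simpa [Finset.mul_sum, smul_eq_mul] using this
  rw [abs_le]
  constructor <;> linarith [(hx k).1, (hx k).2, havg.1, havg.2]

/-- Writing `u = x - x̄` and `v = y - ȳ`, `u² - v² = (x - y - (x̄ - ȳ))(u + v)` and the
`x̄ - ȳ` term sums to zero. -/
lemma varK_sub_varK (x y : K → ℝ) :
    varK x - varK y = (Fintype.card K : ℝ)⁻¹ * ∑ k, (x k - y k) *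
      ((x k - (Fintype.card K : ℝ)⁻¹ * ∑ j, x j) + (y k - (Fintype.card K : ℝ)⁻¹ * ∑ j, y j)) := by
  set x' := (Fintype.card K : ℝ)⁻¹ * ∑ j, x j
  set y' := (Fintype.card K : ℝ)⁻¹ * ∑ j, y j
  have key : ∑ k, (x k - y k) * ((x k - x') + (y k - y'))
      = ∑ k, ((x k - x') ^ 2 - (y k - y') ^ 2)
        + (x' - y') * (∑ k, (x k - x') + ∑ k, (y k - y')) := by
    rw [mul_add, Finset.mul_sum, Finset.mul_sum, ← Finset.sum_add_distrib,
      ← Finset.sum_add_distrib]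
    exact Finset.sum_congr rfl fun k _ => by ring
  rw [key, sum_sub_avg_eq_zero, sum_sub_avg_eq_zero, varK, varK, Finset.sum_sub_distrib]
  ring

lemma abs_varK_sub_varK_le {x y : K → ℝ} (hx : ∀ k, x k ∈ Set.Icc (0 : ℝ) 1)
    (hy : ∀ k, y k ∈ Set.Icc (0 : ℝ) 1) {d : ℝ} (hxy : ∀ k, |x k - y k| ≤ d) :
    |varK x - varK y| ≤ 2 * d := by
  rw [varK_sub_varK, abs_mul, abs_inv, Nat.abs_cast]
  have hterm : ∀ k, |(x k - y k) * ((x k - (Fintype.card K : ℝ)⁻¹ * ∑ j, x j)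
      + (y k - (Fintype.card K : ℝ)⁻¹ * ∑ j, y j))| ≤ 2 * d := fun k => by
    rw [abs_mul, mul_comm 2 d]
    refine mul_le_mul (hxy k) ?_ (abs_nonneg _) ((abs_nonneg _).trans (hxy k))
    linarith [abs_add_le (x k - (Fintype.card K : ℝ)⁻¹ * ∑ j, x j)
      (y k - (Fintype.card K : ℝ)⁻¹ * ∑ j, y j), abs_sub_avg_le_one hx k, abs_sub_avg_le_one hy k]
  calc (Fintype.card K : ℝ)⁻¹ * |∑ k, _| ≤ (Fintype.card K : ℝ)⁻¹ * ∑ _k : K, 2 * d :=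
        mul_le_mul_of_nonneg_left ((Finset.abs_sum_le_sum_abs _ _).trans
          (Finset.sum_le_sum fun k _ => hterm k)) (by positivity)
    _ = 2 * d := by
        rw [Finset.sum_const, Finset.card_univ, nsmul_eq_mul, ← mul_assoc,
          inv_mul_cancel₀ (by positivity), one_mul]

end Variance

section Lipschitz

lemma lipschitzOnWith_of_abs_sub_le {φ : ℝ → ℝ} {s : Set ℝ} {L : ℝ} (hL : 0 ≤ L)
    (hφ : ∀ a ∈ s, ∀ b ∈ s, |φ a - φ b| ≤ L * |a - b|) :
    LipschitzOnWith L.toNNReal φ s :=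
  LipschitzOnWith.of_dist_le_mul fun a ha b hb => by
    simpa [Real.dist_eq, Real.coe_toNNReal L hL] using hφ a ha b hb

lemma LipschitzOnWith.exists_mem_Icc_add_mul {φ : ℝ → ℝ} {L : NNReal} {a b : ℝ} (hab : a ≤ b)
    (hφ : LipschitzOnWith L φ (Set.Icc a b)) :
    ∃ m, ∀ x ∈ Set.Icc a b, φ x ∈ Set.Icc m (m + L * (b - a)) := by
  obtain ⟨x₀, hx₀, hmin⟩ :=
    isCompact_Icc.exists_isMinOn (Set.nonempty_Icc.2 hab) hφ.continuousOn
  refine ⟨φ x₀, fun x hx => ⟨hmin hx, ?_⟩⟩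
  have := (le_abs_self _).trans ((hφ.dist_le_mul x hx x₀ hx₀).trans
    (mul_le_mul_of_nonneg_left (Real.dist_le_of_mem_Icc hx hx₀) L.2))
  linarith

lemma exists_continuous_eqOn_Icc_mem_Icc_add {φ : ℝ → ℝ} {L : ℝ} (hL : 0 ≤ L)
    (hφ : ∀ a ∈ Set.Icc (0 : ℝ) 1, ∀ b ∈ Set.Icc (0 : ℝ) 1, |φ a - φ b| ≤ L * |a - b|) :
    ∃ g : ℝ → ℝ, Continuous g ∧ Set.EqOn φ g (Set.Icc 0 1) ∧
      ∃ m, ∀ x ∈ Set.Icc (0 : ℝ) 1, g x ∈ Set.Icc m (m + L) := by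
  have hφL := lipschitzOnWith_of_abs_sub_le hL hφ
  obtain ⟨g, hg, hφg⟩ := hφL.extend_real
  obtain ⟨m, hm⟩ := hφL.exists_mem_Icc_add_mul zero_le_one
  refine ⟨g, hg.continuous, hφg, m, fun x hx => ?_⟩
  simpa only [← hφg hx, Real.coe_toNNReal L hL, sub_zero, mul_one] using hm x hx

end Lipschitz

lemma two_mul_exp_neg_two_mul_sq_div {c N x : ℝ} (hc : c ≠ 0) (hN : 0 < N) (hx : 1 ≤ x) :
    2 * exp (-2 * (c * √(log x / (2 * N))) ^ 2 / (c ^ 2 / N)) = 2 / x := by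
  rw [mul_pow, sq_sqrt (div_nonneg (log_nonneg hx) (by positivity)),
    show -2 * (c ^ 2 * (log x / (2 * N))) / (c ^ 2 / N) = -log x by field_simp,
    exp_neg, exp_log (by positivity), div_eq_mul_inv]

section FamilyMeans

variable {T K Ω : Type*} [Fintype T] [DecidableEq K]

lemma famEst_eq_sum (fam : T → K) (n : ℕ) (q : T × Fin n → Ω → ℝ) (k : K) (ω : Ω) :
    famEst fam n q k ω = ∑ p ∈ famSet fam k ×ˢ Finset.univ,
      ((n : ℝ) * (famSet fam k).card)⁻¹ * q p ω := by
  simp only [famEst, Finset.sum_product, Finset.mul_sum]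

lemma sum_famSet_product_inv_eq_one {fam : T → K} {k : K} (hk : (famSet fam k).Nonempty)
    {n : ℕ} (hn : 0 < n) :
    ∑ _p ∈ famSet fam k ×ˢ (Finset.univ : Finset (Fin n)), ((n : ℝ) * (famSet fam k).card)⁻¹
      = 1 := by
  have hn' : (n : ℝ) ≠ 0 := by exact_mod_cast hn.ne'
  have hk' : ((famSet fam k).card : ℝ) ≠ 0 := by exact_mod_cast hk.card_pos.ne'
  rw [Finset.sum_const, Finset.card_product, Finset.card_univ, Fintype.card_fin, nsmul_eq_mul,
    Nat.cast_mul]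
  field_simp

lemma famEst_mem_Icc {fam : T → K} {k : K} (hk : (famSet fam k).Nonempty) {n : ℕ} (hn : 0 < n)
    {q : T × Fin n → Ω → ℝ} (hq01 : ∀ p ω, q p ω ∈ Set.Icc (0 : ℝ) 1) (ω : Ω) :
    famEst fam n q k ω ∈ Set.Icc (0 : ℝ) 1 := by
  rw [famEst_eq_sum]
  have := (convex_Icc (0 : ℝ) 1).sum_mem (fun _ _ => by positivity)
    (sum_famSet_product_inv_eq_one hk hn) fun p _ => hq01 p ω
  simpa only [smul_eq_mul] using this

variable [MeasurableSpace Ω] {μ : Measure Ω} [IsProbabilityMeasure μ]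

lemma integral_famEst_mem_Icc {fam : T → K} {k : K} (hk : (famSet fam k).Nonempty) {n : ℕ}
    (hn : 0 < n) {q : T × Fin n → Ω → ℝ} (hqmeas : ∀ p, Measurable (q p))
    (hq01 : ∀ p ω, q p ω ∈ Set.Icc (0 : ℝ) 1) :
    ∫ ω, famEst fam n q k ω ∂μ ∈ Set.Icc (0 : ℝ) 1 := by
  have hmeas : Measurable (famEst fam n q k) :=
    (Finset.measurable_sum _ fun t _ => Finset.measurable_sum _ fun i _ => hqmeas _).const_mul _
  have hmem := ae_of_all μ (famEst_mem_Icc hk hn hq01)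
  exact (convex_Icc 0 1).integral_mem isClosed_Icc hmem
    (Integrable.of_mem_Icc 0 1 hmeas.aemeasurable hmem)


theorem measureReal_abs_famEst_sub_integral_ge_le {fam : T → K} {k : K}
    (hk : (famSet fam k).Nonempty) {n : ℕ} (hn : 0 < n) {q : T × Fin n → Ω → ℝ}
    (hqmeas : ∀ p, Measurable (q p)) (hq01 : ∀ p ω, q p ω ∈ Set.Icc (0 : ℝ) 1)
    (hindep : iIndepFun q μ) {x : ℝ} (hx : 1 ≤ x) :
    μ.real {ω | √(log x / (2 * n)) ≤ |famEst fam n q k ω - ∫ ω', famEst fam n q k ω' ∂μ|}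
      ≤ 2 / x := by
  set r : ℝ := ((n : ℝ) * (famSet fam k).card)⁻¹
  have hr : 0 < r := inv_pos.2 (mul_pos (by exact_mod_cast hn) (by exact_mod_cast hk.card_pos))
  have hsq : ∑ _p ∈ famSet fam k ×ˢ (Finset.univ : Finset (Fin n)), (r - 0) ^ 2 = r := by
    simp only [sub_zero, sq, ← Finset.sum_mul, r, sum_famSet_product_inv_eq_one hk hn, one_mul]
  have hrn : r ≤ 1 ^ 2 / n := by
    rw [one_pow, one_div]
    exact inv_anti₀ (by positivity) (le_mul_of_one_le_right (by positivity)
      (by exact_mod_cast hk.card_pos))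
  simp_rw [famEst_eq_sum]
  refine (measureReal_abs_sum_sub_integral_ge_le
    (hindep.comp (fun _ x => r * x) fun _ => measurable_id.const_mul r)
    (fun p => (hqmeas p).const_mul r) (a := fun _ => 0) (b := fun _ => r)
    (fun p _ ω => ⟨mul_nonneg hr.le (hq01 p ω).1, mul_le_of_le_one_right hr.le (hq01 p ω).2⟩)
    (hsq.symm ▸ hr) (hsq.le.trans hrn) (sqrt_nonneg _)).trans_eq ?_
  simpa using two_mul_exp_neg_two_mul_sq_div one_ne_zero (Nat.cast_pos.2 hn) hx

end FamilyMeans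

section LinearPart

variable {T K Ω : Type*} [Fintype T] [Fintype K] [DecidableEq K]

lemma linEst_eq_sum (fam : T → K) (w : K → ℝ) (ψ : T → ℝ → ℝ) (n : ℕ)
    (q : T × Fin n → Ω → ℝ) (ω : Ω) :
    linEst fam w ψ n q ω = ∑ p : T × Fin n,
      w (fam p.1) / (famSet fam (fam p.1)).card / n * ψ p.1 (q p ω) := by
  rw [Fintype.sum_prod_type, ← Finset.sum_fiberwise Finset.univ fam, linEst]
  refine Finset.sum_congr rfl fun k _ => ?_
  rw [Finset.mul_sum]
  refine Finset.sum_congr rfl fun t ht => ?_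
  rw [Finset.mul_sum, Finset.mul_sum]
  refine Finset.sum_congr rfl fun i _ => ?_
  rw [(Finset.mem_filter.1 ht).2]
  ring

variable [MeasurableSpace Ω] {μ : Measure Ω} [IsProbabilityMeasure μ]

theorem measureReal_abs_linEst_sub_integral_ge_le {fam : T → K} {C : ℝ} (hC : 0 < C)
    {w : K → ℝ} (hw : ∀ k, 0 ≤ w k)
    (hwC : ∀ k, w k / ((famSet fam k).card : ℝ) ≤ C / (Fintype.card T : ℝ))
    {L : ℝ} (hL : 0 < L) {ψ : T → ℝ → ℝ}
    (hψ : ∀ t, ∀ a ∈ Set.Icc (0:ℝ) 1, ∀ b ∈ Set.Icc (0:ℝ) 1, |ψ t a - ψ t b| ≤ L * |a - b|)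
    {n : ℕ} (hn : 0 < n) {q : T × Fin n → Ω → ℝ}
    (hqmeas : ∀ p, Measurable (q p)) (hq01 : ∀ p ω, q p ω ∈ Set.Icc (0 : ℝ) 1)
    (hindep : iIndepFun q μ) [Nonempty T] {x : ℝ} (hx : 1 ≤ x) :
    μ.real {ω | C * L * √(log x / (2 * n * Fintype.card T))
      ≤ |linEst fam w ψ n q ω - ∫ ω', linEst fam w ψ n q ω' ∂μ|} ≤ 2 / x := by
  -- `ψ t` need not be measurable off `[0, 1]`, so we pass to a continuous extension.
  choose g hg hψg m hm using fun t => exists_continuous_eqOn_Icc_mem_Icc_add hL.le (hψ t)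
  set c : T → ℝ := fun t => w (fam t) / (famSet fam (fam t)).card / n
  set δ : ℝ := C * L / (n * Fintype.card T)
  have hc0 : ∀ t, 0 ≤ c t := fun t => by have := hw (fam t); positivity
  have hcL : ∀ t, c t * L ≤ δ := fun t => calc
    c t * L ≤ C / Fintype.card T / n * L :=
      mul_le_mul_of_nonneg_right (div_le_div_of_nonneg_right (hwC _) (Nat.cast_nonneg _)) hL.le
    _ = δ := by ring
  have hlin : linEst fam w ψ n q = fun ω => ∑ p : T × Fin n, c p.1 * g p.1 (q p ω) := by
    ext ω
    rw [linEst_eq_sum]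
    exact Finset.sum_congr rfl fun p _ => by rw [hψg p.1 (hq01 p ω)]
  have hsq : ∑ _p : T × Fin n, (c _p.1 * m _p.1 + δ - c _p.1 * m _p.1) ^ 2
      = (C * L) ^ 2 / (n * Fintype.card T) := by
    simp only [add_sub_cancel_left, Finset.sum_const, Finset.card_univ, Fintype.card_prod,
      Fintype.card_fin, nsmul_eq_mul, δ]
    push_cast
    field_simp
  have hexp : 2 * exp (-2 * (C * L * √(log x / (2 * n * Fintype.card T))) ^ 2
      / ((C * L) ^ 2 / (n * Fintype.card T))) = 2 / x := by
    rw [mul_assoc 2 (n : ℝ)]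
    exact two_mul_exp_neg_two_mul_sq_div (by positivity) (by positivity) hx
  rw [hlin]
  refine (measureReal_abs_sum_sub_integral_ge_le
    (hindep.comp (fun p x => c p.1 * g p.1 x) fun p => (hg p.1).measurable.const_mul _)
    (fun p => ((hg p.1).measurable.comp (hqmeas p)).const_mul _)
    (a := fun p => c p.1 * m p.1) (b := fun p => c p.1 * m p.1 + δ)
    (fun p _ ω => ?_) (hsq ▸ by positivity) hsq.le (by positivity)).trans_eq hexp
  obtain ⟨hlo, hhi⟩ := hm p.1 _ (hq01 p ω)
  show c p.1 * g p.1 (q p ω) ∈ _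
  exact ⟨mul_le_mul_of_nonneg_left hlo (hc0 p.1),
    by nlinarith [mul_le_mul_of_nonneg_left hhi (hc0 p.1), hcL p.1]⟩

end LinearPart

lemma abs_sub_mul_varK_sub_le {K : Type*} [Fintype K] [Nonempty K] {a b lam εa εb : ℝ}
    {x y : K → ℝ} (hlam : 0 ≤ lam) (hab : |a - b| ≤ εa) (hx : ∀ k, x k ∈ Set.Icc (0 : ℝ) 1)
    (hy : ∀ k, y k ∈ Set.Icc (0 : ℝ) 1) (hxy : ∀ k, |x k - y k| ≤ εb) :
    |(a - lam * varK x) - (b - lam * varK y)| ≤ εa + 2 * lam * εb := calc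
  _ = |(a - b) - lam * (varK x - varK y)| := by ring_nf
  _ ≤ |a - b| + lam * |varK x - varK y| :=
      (abs_sub _ _).trans_eq (by rw [abs_mul, abs_of_nonneg hlam])
  _ ≤ εa + lam * (2 * εb) :=
      add_le_add hab (mul_le_mul_of_nonneg_left (abs_varK_sub_varK_le hx hy hxy) hlam)
  _ = εa + 2 * lam * εb := by ring

lemma one_sub_le_measureReal_of_forall_mem {Ω ι : Type*} [MeasurableSpace Ω] {μ : Measure Ω}
    [IsProbabilityMeasure μ] [Fintype ι] {S A : Set Ω} {B : ι → Set Ω} {a : ℝ} {b : ι → ℝ}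
    (hA : μ.real A ≤ a) (hB : ∀ i, μ.real (B i) ≤ b i)
    (h : ∀ ω, ω ∉ A → (∀ i, ω ∉ B i) → ω ∈ S) :
    1 - (a + ∑ i, b i) ≤ μ.real S := by
  have hcover : Sᶜ ⊆ A ∪ ⋃ i, B i := fun ω hω => by
    by_contra hgood
    simp only [Set.mem_union, Set.mem_iUnion, not_or, not_exists] at hgood
    exact hω (h ω hgood.1 hgood.2)
  have hsplit : 1 ≤ μ.real S + μ.real Sᶜ := by
    rw [← probReal_univ (μ := μ), ← Set.union_compl_self S]
    exact measureReal_union_le _ _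
  linarith [measureReal_mono (μ := μ) hcover, measureReal_union_le (μ := μ) A (⋃ i, B i),
    measureReal_iUnion_fintype_le (μ := μ) B, Finset.sum_le_sum fun i (_ : i ∈ Finset.univ) => hB i]

/-- **Finite-sample concentration of the plug-in AAI estimator** (cost term omitted).
With per-seed sensitivity controlled by `w_k/|F_k| ≤ C/|T|` and `L`-Lipschitz `ψ_t`,
for `n` independent `[0,1]`-valued seeds per task the empirical score
`Φ̂ = linear part − λ·V(m̂)` concentrates around the population score
`Φ = E[linear part] − λ·V(m)`: with probability at least `1 − δ`,
`|Φ̂ − Φ| ≤ C·L·√(log(4/δ)/(2n|T|)) + 2λ·√(log(4|K|/δ)/(2n))`. -/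
theorem stmt_17 {T K : Type*} [Fintype T] [Nonempty T] [Fintype K] [Nonempty K]
    [DecidableEq K] {Ω : Type*} [MeasurableSpace Ω]
    (μ : Measure Ω) [IsProbabilityMeasure μ]
    (fam : T → K) (hfam : Function.Surjective fam)
    (C : ℝ) (hC : 0 < C) (w : K → ℝ) (hw : ∀ k, 0 ≤ w k)
    (hwC : ∀ k, w k / ((famSet fam k).card : ℝ) ≤ C / (Fintype.card T : ℝ))
    (L : ℝ) (hL : 0 < L) (ψ : T → ℝ → ℝ)
    (hψ : ∀ t, ∀ a ∈ Set.Icc (0:ℝ) 1, ∀ b ∈ Set.Icc (0:ℝ) 1,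
      |ψ t a - ψ t b| ≤ L * |a - b|)
    (lam : ℝ) (hlam : 0 ≤ lam)
    (n : ℕ) (hn : 1 ≤ n)
    (q : T × Fin n → Ω → ℝ)
    (hqmeas : ∀ ti, Measurable (q ti))
    (hq01 : ∀ ti ω, q ti ω ∈ Set.Icc (0:ℝ) 1)
    (hindep : iIndepFun q μ) :
    ∀ δ : ℝ, δ ∈ Set.Ioo (0:ℝ) 1 →
      1 - δ ≤
        (μ {ω |
          |(linEst fam w ψ n q ω - lam * varK (fun k => famEst fam n q k ω))
            - ((∫ ω', linEst fam w ψ n q ω' ∂μ)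
                - lam * varK (fun k => ∫ ω', famEst fam n q k ω' ∂μ))|
          ≤ C * L * Real.sqrt (Real.log (4 / δ) / (2 * n * (Fintype.card T : ℝ)))
            + 2 * lam * Real.sqrt (Real.log (4 * (Fintype.card K : ℝ) / δ) / (2 * n))
          }).toReal := by
  rintro δ ⟨hδ0, hδ1⟩
  have hK : (1 : ℝ) ≤ Fintype.card K := by exact_mod_cast Fintype.card_pos
  have hne : ∀ k, (famSet fam k).Nonempty := fun k =>
    (hfam k).imp fun t ht => Finset.mem_filter.2 ⟨Finset.mem_univ t, ht⟩
  have hA := measureReal_abs_linEst_sub_integral_ge_le (μ := μ) hC hw hwC hL hψ hn hqmeas hq01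
    hindep (x := 4 / δ) (by rw [le_div_iff₀ hδ0]; linarith)
  have hB := fun k => measureReal_abs_famEst_sub_integral_ge_le (hne k) hn hqmeas hq01 hindep
    (x := 4 * Fintype.card K / δ) (by rw [le_div_iff₀ hδ0]; linarith)
  calc 1 - δ = 1 - (2 / (4 / δ) + ∑ _k : K, 2 / (4 * Fintype.card K / δ)) := by
        rw [Finset.sum_const, Finset.card_univ, nsmul_eq_mul]
        field_simp
        ring
    _ ≤ _ := one_sub_le_measureReal_of_forall_mem hA hB fun ω hωA hωB =>
        abs_sub_mul_varK_sub_le hlam (not_le.1 hωA).le (fun k => famEst_mem_Icc (hne k) hn hq01 ω)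
          (fun k => integral_famEst_mem_Icc (hne k) hn hqmeas hq01) fun k => (not_le.1 (hωB k)).le
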